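/- Let P : Cᵒᵖ → Pos be a Boolean doctrine, X an object of C and φ ∈ P(X). For α ∈ P_(X,φ)(A) define ⌉α := ¬α ∧ P(pr₁)(φ), where ¬ is the negation in the Boolean algebra P(X×A). Then P_(X,φ) is a Boolean doctrine: each fiber P(X×A)_{↓P(pr₁)(φ)} is a Heyting algebra (with meets and joins computed in P(X×A), top P(pr₁)(φ), bottom ⊥, implication (α → β) ∧ P(pr₁)(φ)) in which ⌉⌉α = α for every α ≤ P(pr₁)(φ); and (F_X, 𝔣) is a Boolean morphism, in particular 𝔣_A(¬α) = ⌉𝔣_A(α) for all α ∈ P(A). In particular, in any Boolean algebra, if a ≤ x then ¬(¬a ∧ x) ∧ x = a. -/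
import Mathlib


open CategoryTheory CategoryTheory.Limits

universe w w' v u

/-- A Boolean doctrine: a doctrine whose fibers are Heyting algebras, whose reindexings
preserve meets, joins, top, bottom and implication, and in which negation is involutive
(equivalently, every fiber is a Boolean algebra). -/
structure BooleanDoctrine (C : Type u) [Category.{v} C] where
  obj : C → Type w
  [ha : ∀ A, HeytingAlgebra (obj A)]
  map : ∀ {A B : C}, (A ⟶ B) → obj B → obj A
  map_id : ∀ (A : C) (α : obj A), map (𝟙 A) α = α
  map_comp : ∀ {A B D : C} (f : A ⟶ B) (g : B ⟶ D) (α : obj D),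
      map (f ≫ g) α = map f (map g α)
  map_inf : ∀ {A B : C} (f : A ⟶ B) (α β : obj B), map f (α ⊓ β) = map f α ⊓ map f β
  map_sup : ∀ {A B : C} (f : A ⟶ B) (α β : obj B), map f (α ⊔ β) = map f α ⊔ map f β
  map_top : ∀ {A B : C} (f : A ⟶ B), map f (⊤ : obj B) = ⊤
  map_bot : ∀ {A B : C} (f : A ⟶ B), map f (⊥ : obj B) = ⊥
  map_himp : ∀ {A B : C} (f : A ⟶ B) (α β : obj B), map f (α ⇨ β) = map f α ⇨ map f β
  compl_compl : ∀ (A : C) (α : obj A), αᶜᶜ = α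

attribute [instance] BooleanDoctrine.ha

/-- `𝔣_A(α) = P(pr₁)(φ) ⊓ P(pr₂)(α)`. -/
noncomputable def BooleanDoctrine.frak {C : Type u} [Category.{v} C] [HasFiniteProducts C]
    (P : BooleanDoctrine.{w} C) {X : C} (φ : P.obj X) (A : C) (α : P.obj A) :
    P.obj (X ⨯ A) :=
  P.map prod.fst φ ⊓ P.map prod.snd α


section Helpers

lemma himp_trick {L : Type*} [HeytingAlgebra L] (x a b : L) :
    x ⊓ (a ⇨ b) = ((x ⊓ a) ⇨ (x ⊓ b)) ⊓ x := by
  apply le_antisymm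
  · refine le_inf ?_ inf_le_left
    rw [le_himp_iff]
    refine le_inf (inf_le_right.trans inf_le_left) ?_
    calc x ⊓ (a ⇨ b) ⊓ (x ⊓ a) ≤ (a ⇨ b) ⊓ a :=
          inf_le_inf inf_le_right inf_le_right
      _ ≤ b := by rw [inf_comm]; exact inf_himp_le
  · refine le_inf inf_le_right ?_
    rw [le_himp_iff]
    calc ((x ⊓ a) ⇨ (x ⊓ b)) ⊓ x ⊓ a = ((x ⊓ a) ⇨ (x ⊓ b)) ⊓ (x ⊓ a) := by
          rw [inf_assoc]
      _ ≤ x ⊓ b := by rw [inf_comm]; exact inf_himp_le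
      _ ≤ b := inf_le_right

lemma dneg_trick {L : Type*} [HeytingAlgebra L] (h : ∀ a : L, aᶜᶜ = a)
    (a x : L) (hax : a ≤ x) : (aᶜ ⊓ x)ᶜ ⊓ x = a := by
  apply le_antisymm
  · conv_rhs => rw [← h a]
    rw [← himp_bot (aᶜ), le_himp_iff]
    calc (aᶜ ⊓ x)ᶜ ⊓ x ⊓ aᶜ ≤ (aᶜ ⊓ x)ᶜ ⊓ (aᶜ ⊓ x) := by
          refine le_inf (inf_le_left.trans inf_le_left) (le_inf inf_le_right ?_)
          exact inf_le_left.trans inf_le_right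
      _ ≤ ⊥ := by simp
  · refine le_inf ?_ hax
    rw [← himp_bot, le_himp_iff]
    calc a ⊓ (aᶜ ⊓ x) ≤ a ⊓ aᶜ := inf_le_inf_left _ inf_le_left
      _ = ⊥ := inf_compl_self a

end Helpers

/-- If `P` is a Boolean doctrine, then `P_(X,φ)` is a Boolean doctrine,
with negation `⌉α := ¬α ⊓ P(pr₁)(φ)`, and `(F_X, 𝔣)` is a Boolean morphism. -/
theorem pXphi_boolean {C : Type u} [Category.{v} C] [HasFiniteProducts C]
    (P : BooleanDoctrine.{w} C) (X : C) (φ : P.obj X) :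
    -- each fiber of `P_(X,φ)` is a Heyting algebra: it is closed under meets and joins,
    -- contains `⊥`, has top `P(pr₁)(φ)`, …
    (∀ (A : C) (α β : P.obj (X ⨯ A)), α ≤ P.map prod.fst φ → β ≤ P.map prod.fst φ →
      α ⊓ β ≤ P.map prod.fst φ ∧ α ⊔ β ≤ P.map prod.fst φ) ∧
    (∀ A : C, (⊥ : P.obj (X ⨯ A)) ≤ P.map prod.fst φ) ∧
    -- … with implication `(α → β) ⊓ P(pr₁)(φ)`:
    (∀ (A : C) (α β γ : P.obj (X ⨯ A)),
      α ≤ P.map prod.fst φ → β ≤ P.map prod.fst φ → γ ≤ P.map prod.fst φ →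
      (α ⊓ β ≤ γ ↔ α ≤ (β ⇨ γ) ⊓ P.map prod.fst φ)) ∧
    -- its operations are natural w.r.t. the reindexings of `P_(X,φ)`:
    (∀ (A B : C) (g : (X ⨯ A : C) ⟶ B) (α β : P.obj (X ⨯ B)),
      P.map (prod.lift prod.fst g) (P.map (prod.fst : X ⨯ B ⟶ X) φ)
          = P.map (prod.fst : X ⨯ A ⟶ X) φ ∧
      P.map (prod.lift prod.fst g) ((α ⇨ β) ⊓ P.map prod.fst φ)
          = (P.map (prod.lift prod.fst g) α ⇨ P.map (prod.lift prod.fst g) β)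
              ⊓ P.map prod.fst φ) ∧
    -- and it is Boolean: `⌉⌉α = α` where `⌉α = ¬α ⊓ P(pr₁)(φ)`
    (∀ (A : C) (α : P.obj (X ⨯ A)), α ≤ P.map prod.fst φ →
      (αᶜ ⊓ P.map prod.fst φ)ᶜ ⊓ P.map prod.fst φ = α) ∧
    -- `(F_X, 𝔣)` is a Boolean morphism
    (∀ (A : C) (α β : P.obj A),
      P.frak φ A (α ⊓ β) = P.frak φ A α ⊓ P.frak φ A β ∧
      P.frak φ A (α ⊔ β) = P.frak φ A α ⊔ P.frak φ A β ∧
      P.frak φ A (α ⇨ β) = (P.frak φ A α ⇨ P.frak φ A β) ⊓ P.map prod.fst φ) ∧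
    (∀ A : C, P.frak φ A (⊤ : P.obj A) = P.map (prod.fst : X ⨯ A ⟶ X) φ
      ∧ P.frak φ A (⊥ : P.obj A) = ⊥) ∧
    (∀ (A : C) (α : P.obj A), P.frak φ A (αᶜ) = (P.frak φ A α)ᶜ ⊓ P.map prod.fst φ) ∧
    -- in particular, in any Boolean algebra, if `a ≤ x` then `¬(¬a ⊓ x) ⊓ x = a`
    (∀ (L : Type w') [BooleanAlgebra L] (a x : L), a ≤ x → (aᶜ ⊓ x)ᶜ ⊓ x = a) := by

  have key : ∀ (A : C) (α β : P.obj A),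
      P.frak φ A (α ⇨ β) = (P.frak φ A α ⇨ P.frak φ A β) ⊓ P.map prod.fst φ := by
    intro A α β
    unfold BooleanDoctrine.frak
    rw [P.map_himp, himp_trick]
  refine ⟨?_, ?_, ?_, ?_, ?_, ?_, ?_, ?_, ?_⟩
  · intro A α β hα hβ
    exact ⟨inf_le_left.trans hα, sup_le hα hβ⟩
  · intro A; exact bot_le
  · intro A α β γ hα hβ hγ
    constructor
    · intro h; exact le_inf (le_himp_iff.mpr h) hα
    · intro h
      calc α ⊓ β ≤ (β ⇨ γ) ⊓ β := inf_le_inf_right _ (h.trans inf_le_left)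
        _ ≤ γ := by rw [inf_comm]; exact inf_himp_le
  · intro A B g α β
    have h1 : P.map (prod.lift prod.fst g) (P.map (prod.fst : X ⨯ B ⟶ X) φ)
        = P.map (prod.fst : X ⨯ A ⟶ X) φ := by
      rw [← P.map_comp, prod.lift_fst]
    refine ⟨h1, ?_⟩
    rw [P.map_inf, P.map_himp, h1]
  · intro A α hα
    exact dneg_trick (P.compl_compl _) α _ hα
  · intro A α β
    refine ⟨?_, ?_, key A α β⟩
    · unfold BooleanDoctrine.frak
      rw [P.map_inf]
      rw [inf_inf_distrib_left]
    · unfold BooleanDoctrine.frak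
      rw [P.map_sup, inf_sup_left]
  · intro A
    unfold BooleanDoctrine.frak
    rw [P.map_top, P.map_bot, inf_top_eq, inf_bot_eq]
    exact ⟨rfl, rfl⟩
  · intro A α
    have := key A α ⊥
    rw [himp_bot] at this
    rw [this]
    unfold BooleanDoctrine.frak
    rw [P.map_bot, inf_bot_eq, himp_bot]
  · intro L _ a x hax
    exact dneg_trick (fun a => compl_compl a) a x hax
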